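/- Let H₁ = H₂ = ℂ² with orthonormal basis {|0⟩, |1⟩}, let α, β ∈ ℂ with |α|² + |β|² = 1, and let φ = α·|0⟩⊗|0⟩ + β·|1⟩⊗|1⟩. Then E_γ(|φ⟩⟨φ|) := ‖|φ⟩⟨φ|‖_γ · ln ‖|φ⟩⟨φ|‖_γ = 2(|α| + |β|)² · ln(|α| + |β|), while the von Neumann reduced entropy satisfies S_vN(|φ⟩⟨φ|) = −|α|² ln|α|² − |β|² ln|β|². In particular, there exists a pure-state density operator P on ℂ² ⊗ ℂ² with E_γ(P) ≠ S_vN(P). -/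

import Mathlib

open Matrix
open scoped Kronecker ComplexOrder

noncomputable def traceNorm {n : Type*} [Fintype n] [DecidableEq n] (A : Matrix n n ℂ) : ℝ :=
  ((Matrix.posSemidef_conjTranspose_mul_self A).1.eigenvectorUnitary.1 *
    diagonal (((↑) : ℝ → ℂ) ∘ (√·) ∘ (Matrix.posSemidef_conjTranspose_mul_self A).1.eigenvalues) *
    (star (Matrix.posSemidef_conjTranspose_mul_self A).1.eigenvectorUnitary : Matrix n n ℂ)).trace.re

noncomputable def gammaNorm {m n : Type*} [Fintype m] [DecidableEq m] [Fintype n] [DecidableEq n]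
    (t : Matrix (m × n) (m × n) ℂ) : ℝ :=
  sInf { c : ℝ | ∃ (r : ℕ) (u : Fin r → Matrix m m ℂ) (v : Fin r → Matrix n n ℂ),
    t = ∑ i, (u i) ⊗ₖ (v i) ∧ c = ∑ i, traceNorm (u i) * traceNorm (v i) }

def IsDensity {n : Type*} [Fintype n] (ρ : Matrix n n ℂ) : Prop :=
  ρ.PosSemidef ∧ ρ.trace = 1

def evec {ι : Type*} (ψ : EuclideanSpace ℂ ι) : ι → ℂ := ψ

noncomputable def tensorVec {ι κ : Type*} (a : EuclideanSpace ℂ ι) (b : EuclideanSpace ℂ κ) :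
    EuclideanSpace ℂ (ι × κ) :=
  (WithLp.equiv 2 _).symm (fun p => evec a p.1 * evec b p.2)

noncomputable def projOnto {ι : Type*} (ψ : EuclideanSpace ℂ ι) : Matrix ι ι ℂ :=
  Matrix.vecMulVec (evec ψ) (star (evec ψ))

/-- Partial trace over the second factor. -/
noncomputable def ptraceRight {m n : Type*} [Fintype n]
    (M : Matrix (m × n) (m × n) ℂ) : Matrix m m ℂ :=
  Matrix.of fun i k => ∑ j, M (i, j) (k, j)

/-- Partial trace over the first factor. -/
noncomputable def ptraceLeft {m n : Type*} [Fintype m]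
    (M : Matrix (m × n) (m × n) ℂ) : Matrix n n ℂ :=
  Matrix.of fun j l => ∑ i, M (i, j) (i, l)

/-- The von Neumann entropy \`-Tr(ρ ln ρ)\` of a Hermitian matrix, computed via its
spectral decomposition with the convention \`0 ln 0 = 0\` (junk value 0 otherwise). -/
noncomputable def vNEntropy {n : Type*} [Fintype n] [DecidableEq n]
    (A : Matrix n n ℂ) : ℝ :=
  if h : A.IsHermitian then -∑ i, h.eigenvalues i * Real.log (h.eigenvalues i) else 0

/-!
For `φ = ∑ᵢ cᵢ |i⟩ ⊗ |i⟩`, writing `|φ⟩⟨φ| = ∑ₛₜ (cₛ c̄ₜ Eₛₜ) ⊗ Eₛₜ` in matrix units costs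
`∑ₛₜ |cₛ| |cₜ| = (∑ᵢ |cᵢ|)²`. This is optimal: with unimodular phases `Dₛₜ` aligned with
`cₛ c̄ₜ`, the functional `t ↦ ∑ₛₜ Dₛₜ t₍ₛₛ₎₍ₜₜ₎` takes the value `(∑ᵢ |cᵢ|)²` on `|φ⟩⟨φ|`,
while on `u ⊗ v` it is at most `∑ₛₜ |uₛₜ| |vₛₜ| ≤ ‖u‖_F ‖v‖_F ≤ ‖u‖₁ ‖v‖₁`. The reduced state
is `diag(|cᵢ|²)`, so its entropy is `-∑ᵢ |cᵢ|² ln |cᵢ|²`. At `α = β = 1/√2` this gives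
`E_γ = 2 ln 2 ≠ ln 2 = S_vN`.
-/

open Finset

namespace Matrix.IsHermitian

variable {𝕜 n : Type*} [RCLike 𝕜] [Fintype n] [DecidableEq n]

lemma sum_comp_eigenvalues_of_eq_diagonal {A : Matrix n n 𝕜} (hA : A.IsHermitian) {d : n → ℝ}
    (hd : A = diagonal (RCLike.ofReal ∘ d)) (f : ℝ → ℝ) :
    ∑ i, f (hA.eigenvalues i) = ∑ i, f (d i) := by
  have hroots : (univ.val.map (RCLike.ofReal ∘ hA.eigenvalues) : Multiset 𝕜) =
      univ.val.map (RCLike.ofReal ∘ d) := by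
    rw [← hA.roots_charpoly_eq_eigenvalues, hd, charpoly_diagonal,
      Polynomial.roots_prod _ _ (prod_ne_zero_iff.mpr fun i _ => Polynomial.X_sub_C_ne_zero _)]
    simp only [Polynomial.roots_X_sub_C, Multiset.bind_singleton]
  have := congrArg (fun s => (s.map (f ∘ RCLike.re)).sum) hroots
  simp only [Multiset.map_map, Function.comp_def, RCLike.ofReal_re] at this
  exact this

end Matrix.IsHermitian

section TraceNorm

variable {n : Type*} [Fintype n] [DecidableEq n]

lemma traceNorm_eq_sum_sqrt_eigenvalues (A : Matrix n n ℂ) :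
    traceNorm A = ∑ i, √((posSemidef_conjTranspose_mul_self A).1.eigenvalues i) := by
  rw [traceNorm, trace_mul_cycle]
  simp [trace_diagonal, Complex.re_sum]

lemma traceNorm_nonneg (A : Matrix n n ℂ) : 0 ≤ traceNorm A := by
  rw [traceNorm_eq_sum_sqrt_eigenvalues]
  positivity

lemma traceNorm_of_conjTranspose_mul_self_eq_diagonal {A : Matrix n n ℂ} {d : n → ℝ}
    (hd : 0 ≤ d) (h : Aᴴ * A = diagonal (RCLike.ofReal ∘ (d ^ 2))) :
    traceNorm A = ∑ i, d i := by
  rw [traceNorm_eq_sum_sqrt_eigenvalues, IsHermitian.sum_comp_eigenvalues_of_eq_diagonal _ h]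
  simp [Real.sqrt_sq (hd _)]

lemma traceNorm_single (s t : n) (c : ℂ) : traceNorm (single s t c) = ‖c‖ := by
  have h : (single s t c)ᴴ * single s t c =
      diagonal (RCLike.ofReal ∘ (Pi.single t ‖c‖ ^ 2)) := by
    rw [conjTranspose_single, single_mul_single_same, ← diagonal_single, RCLike.star_def,
      RCLike.conj_mul]
    congr 1
    ext i
    by_cases hi : i = t <;> simp [hi]
  rw [traceNorm_of_conjTranspose_mul_self_eq_diagonal (Pi.single_nonneg.mpr (norm_nonneg c)) h]
  simp

lemma sum_norm_sq_le_traceNorm_sq (A : Matrix n n ℂ) :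
    ∑ p : n × n, ‖A p.1 p.2‖ ^ 2 ≤ traceNorm A ^ 2 := by
  have hP := posSemidef_conjTranspose_mul_self A
  have htrace : ∑ p : n × n, ‖A p.1 p.2‖ ^ 2 = ∑ i, hP.1.eigenvalues i := by
    have := congrArg Complex.re hP.1.trace_eq_sum_eigenvalues
    simp only [trace, Matrix.diag, mul_apply, conjTranspose_apply, RCLike.star_def,
      RCLike.conj_mul, Complex.re_sum] at this
    rw [Fintype.sum_prod_type_right]
    simpa [← Complex.ofReal_pow] using this
  rw [htrace, traceNorm_eq_sum_sqrt_eigenvalues]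
  calc ∑ i, hP.1.eigenvalues i = ∑ i, √(hP.1.eigenvalues i) ^ 2 := by
        simp [Real.sq_sqrt (hP.eigenvalues_nonneg _)]
    _ ≤ (∑ i, √(hP.1.eigenvalues i)) ^ 2 :=
        sum_sq_le_sq_sum_of_nonneg fun _ _ => by positivity

lemma sum_norm_mul_norm_le_traceNorm_mul (u v : Matrix n n ℂ) :
    ∑ p : n × n, ‖u p.1 p.2‖ * ‖v p.1 p.2‖ ≤ traceNorm u * traceNorm v :=
  calc ∑ p : n × n, ‖u p.1 p.2‖ * ‖v p.1 p.2‖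
      ≤ √(∑ p : n × n, ‖u p.1 p.2‖ ^ 2) * √(∑ p : n × n, ‖v p.1 p.2‖ ^ 2) :=
        Real.sum_mul_le_sqrt_mul_sqrt _ _ _
    _ ≤ traceNorm u * traceNorm v := by
        apply mul_le_mul _ _ (Real.sqrt_nonneg _) (traceNorm_nonneg u)
        · exact Real.sqrt_le_iff.mpr ⟨traceNorm_nonneg u, sum_norm_sq_le_traceNorm_sq u⟩
        · exact Real.sqrt_le_iff.mpr ⟨traceNorm_nonneg v, sum_norm_sq_le_traceNorm_sq v⟩

end TraceNorm

theorem gammaNorm_eq_of_dual_certificate {m n : Type*} [Fintype m] [DecidableEq m] [Fintype n]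
    [DecidableEq n] {t : Matrix (m × n) (m × n) ℂ} {ι : Type*} [Fintype ι]
    {u : ι → Matrix m m ℂ} {v : ι → Matrix n n ℂ} (ht : t = ∑ i, u i ⊗ₖ v i)
    (L : Matrix (m × n) (m × n) ℂ →ₗ[ℂ] ℂ)
    (hL : ∀ a b, ‖L (a ⊗ₖ b)‖ ≤ traceNorm a * traceNorm b)
    (hLt : ∑ i, traceNorm (u i) * traceNorm (v i) ≤ ‖L t‖) :
    gammaNorm t = ∑ i, traceNorm (u i) * traceNorm (v i) := by
  refine IsLeast.csInf_eq ⟨?_, ?_⟩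
  · let e := Fintype.equivFin ι
    refine ⟨Fintype.card ι, u ∘ e.symm, v ∘ e.symm, ?_, ?_⟩
    · rw [ht, ← e.symm.sum_comp]; rfl
    · rw [← e.symm.sum_comp]; rfl
  · rintro _ ⟨r, u', v', rfl, rfl⟩
    calc ∑ i, traceNorm (u i) * traceNorm (v i) ≤ ‖L (∑ i, u' i ⊗ₖ v' i)‖ := hLt
      _ ≤ ∑ i, ‖L (u' i ⊗ₖ v' i)‖ := by rw [map_sum]; exact norm_sum_le _ _
      _ ≤ ∑ i, traceNorm (u' i) * traceNorm (v' i) := sum_le_sum fun i _ => hL _ _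

section Phase

variable {𝕜 : Type*} [RCLike 𝕜]

lemma star_div_norm_mul_self (z : 𝕜) : star z / ‖z‖ * z = ‖z‖ := by
  rw [div_mul_eq_mul_div, RCLike.star_def, RCLike.conj_mul, sq]
  rcases eq_or_ne z 0 with rfl | hz
  · simp
  · exact mul_div_cancel_right₀ _ (by simpa using hz)

lemma norm_star_div_norm_le_one (z : 𝕜) : ‖star z / ‖z‖‖ ≤ 1 := by
  rw [norm_div, norm_star, RCLike.norm_ofReal, abs_norm]
  exact div_self_le_one _

end Phase

section Schmidt

variable {n : Type*} [Fintype n] [DecidableEq n]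

def diagPairing (D : Matrix n n ℂ) : Matrix (n × n) (n × n) ℂ →ₗ[ℂ] ℂ where
  toFun t := ∑ p : n × n, D p.1 p.2 * t (p.1, p.1) (p.2, p.2)
  map_add' _ _ := by simp only [Matrix.add_apply, mul_add, sum_add_distrib]
  map_smul' _ _ := by
    simp only [Matrix.smul_apply, smul_eq_mul, mul_sum, RingHom.id_apply, mul_left_comm]

lemma norm_diagPairing_kronecker_le {D : Matrix n n ℂ} (hD : ∀ i j, ‖D i j‖ ≤ 1)
    (a b : Matrix n n ℂ) : ‖diagPairing D (a ⊗ₖ b)‖ ≤ traceNorm a * traceNorm b :=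
  calc ‖∑ p : n × n, D p.1 p.2 * (a ⊗ₖ b) (p.1, p.1) (p.2, p.2)‖
      ≤ ∑ p : n × n, ‖D p.1 p.2 * (a ⊗ₖ b) (p.1, p.1) (p.2, p.2)‖ := norm_sum_le _ _
    _ ≤ ∑ p : n × n, ‖a p.1 p.2‖ * ‖b p.1 p.2‖ := sum_le_sum fun p _ => by
        rw [norm_mul, kroneckerMap_apply, norm_mul]
        exact mul_le_of_le_one_left (by positivity) (hD _ _)
    _ ≤ traceNorm a * traceNorm b := sum_norm_mul_norm_le_traceNorm_mul a b

noncomputable def schmidtVec (c : n → ℂ) : EuclideanSpace ℂ (n × n) :=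
  ∑ i, c i • tensorVec (EuclideanSpace.single i 1) (EuclideanSpace.single i 1)

lemma schmidtVec_apply (c : n → ℂ) (p : n × n) :
    schmidtVec c p = if p.1 = p.2 then c p.1 else 0 := by
  obtain ⟨i, j⟩ := p
  rcases eq_or_ne i j with rfl | hij <;> simp [schmidtVec, tensorVec, evec, *]

lemma norm_schmidtVec_sq (c : n → ℂ) : ‖schmidtVec c‖ ^ 2 = ∑ i, ‖c i‖ ^ 2 := by
  rw [EuclideanSpace.norm_sq_eq, Fintype.sum_prod_type]
  simp [schmidtVec_apply, apply_ite (fun z : ℂ => ‖z‖ ^ 2)]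

lemma projOnto_schmidtVec_eq_sum_kronecker (c : n → ℂ) :
    projOnto (schmidtVec c) =
      ∑ p : n × n, single p.1 p.2 (c p.1 * star (c p.2)) ⊗ₖ single p.1 p.2 (1 : ℂ) := by
  ext ⟨i, k⟩ ⟨j, l⟩
  rcases eq_or_ne i k with rfl | hik <;> rcases eq_or_ne j l with rfl | hjl <;>
    simp [projOnto, vecMulVec_apply, evec, schmidtVec_apply, Matrix.sum_apply, single_apply,
      Fintype.sum_prod_type, ite_and, *, Ne.symm]

theorem gammaNorm_projOnto_schmidtVec (c : n → ℂ) :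
    gammaNorm (projOnto (schmidtVec c)) = (∑ i, ‖c i‖) ^ 2 := by
  let D : Matrix n n ℂ := of fun s t => star (c s * star (c t)) / ‖c s * star (c t)‖
  have hpair : diagPairing D (projOnto (schmidtVec c)) =
      ∑ p : n × n, (‖c p.1 * star (c p.2)‖ : ℂ) := by
    simp only [diagPairing, LinearMap.coe_mk, AddHom.coe_mk, D, of_apply, projOnto,
      vecMulVec_apply, evec, Pi.star_apply, schmidtVec_apply, if_true]
    exact sum_congr rfl fun p _ => star_div_norm_mul_self _
  have hcost : ∑ p : n × n, traceNorm (single p.1 p.2 (c p.1 * star (c p.2))) *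
      traceNorm (single p.1 p.2 (1 : ℂ)) = ∑ p : n × n, ‖c p.1 * star (c p.2)‖ := by
    simp only [traceNorm_single, norm_one, mul_one]
  rw [gammaNorm_eq_of_dual_certificate (projOnto_schmidtVec_eq_sum_kronecker c) (diagPairing D)
    (norm_diagPairing_kronecker_le fun s t => norm_star_div_norm_le_one _), hcost]
  · simp [sq, sum_mul_sum, Fintype.sum_prod_type]
  · rw [hcost, hpair, ← Complex.ofReal_sum, Complex.norm_real, Real.norm_of_nonneg (by positivity)]

lemma ptraceRight_projOnto_schmidtVec (c : n → ℂ) :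
    ptraceRight (projOnto (schmidtVec c)) = diagonal (RCLike.ofReal ∘ fun i => ‖c i‖ ^ 2) := by
  ext i k
  rcases eq_or_ne i k with rfl | hik
  · simp [ptraceRight, projOnto, vecMulVec_apply, evec, schmidtVec_apply, Complex.mul_conj']
  · simp [ptraceRight, projOnto, vecMulVec_apply, evec, schmidtVec_apply, hik, hik.symm]

lemma vNEntropy_diagonal (d : n → ℝ) :
    vNEntropy (diagonal (RCLike.ofReal ∘ d) : Matrix n n ℂ) = -∑ i, d i * Real.log (d i) := by
  have hH : (diagonal (RCLike.ofReal ∘ d) : Matrix n n ℂ).IsHermitian :=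
    isHermitian_diagonal_of_self_adjoint _ (by ext; simp)
  rw [vNEntropy, dif_pos hH, hH.sum_comp_eigenvalues_of_eq_diagonal rfl (fun x => x * Real.log x)]

theorem vNEntropy_ptraceRight_projOnto_schmidtVec (c : n → ℂ) :
    vNEntropy (ptraceRight (projOnto (schmidtVec c))) =
      -∑ i, ‖c i‖ ^ 2 * Real.log (‖c i‖ ^ 2) := by
  rw [ptraceRight_projOnto_schmidtVec, vNEntropy_diagonal]

end Schmidt

theorem Egamma_ne_reduced_entropy_general (α β : ℂ)
    (φ : EuclideanSpace ℂ (Fin 2 × Fin 2))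
    (hφ : φ = α • tensorVec (EuclideanSpace.single (0 : Fin 2) (1 : ℂ))
                            (EuclideanSpace.single (0 : Fin 2) (1 : ℂ)) +
              β • tensorVec (EuclideanSpace.single (1 : Fin 2) (1 : ℂ))
                            (EuclideanSpace.single (1 : Fin 2) (1 : ℂ))) :
    gammaNorm (projOnto φ) * Real.log (gammaNorm (projOnto φ)) =
      2 * (‖α‖ + ‖β‖) ^ 2 * Real.log (‖α‖ + ‖β‖) ∧
    vNEntropy (ptraceRight (projOnto φ)) =
      -(‖α‖ ^ 2 * Real.log (‖α‖ ^ 2)) -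
        ‖β‖ ^ 2 * Real.log (‖β‖ ^ 2) ∧
    ∃ ψ : EuclideanSpace ℂ (Fin 2 × Fin 2), ‖ψ‖ = 1 ∧
      gammaNorm (projOnto ψ) * Real.log (gammaNorm (projOnto ψ)) ≠
        vNEntropy (ptraceRight (projOnto ψ)) := by
  have hφc : φ = schmidtVec ![α, β] := by rw [hφ, schmidtVec, Fin.sum_univ_two]; rfl
  subst hφc
  have hγ : ‖((√2)⁻¹ : ℂ)‖ ^ 2 = 2⁻¹ := by
    rw [norm_inv, Complex.norm_real, Real.norm_of_nonneg (by positivity), inv_pow,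
      Real.sq_sqrt zero_le_two]
  refine ⟨?_, ?_, schmidtVec fun _ => ((√2)⁻¹ : ℂ), ?_, ?_⟩
  · rw [gammaNorm_projOnto_schmidtVec, Real.log_pow, Fin.sum_univ_two]
    simp only [Matrix.cons_val_zero, Matrix.cons_val_one]
    push_cast
    ring
  · rw [vNEntropy_ptraceRight_projOnto_schmidtVec, Fin.sum_univ_two]
    simp only [Matrix.cons_val_zero, Matrix.cons_val_one]
    ring
  · rw [← Real.sqrt_sq (norm_nonneg _), norm_schmidtVec_sq, Fin.sum_univ_two, hγ]
    norm_num
  · rw [gammaNorm_projOnto_schmidtVec, vNEntropy_ptraceRight_projOnto_schmidtVec,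
      Fin.sum_univ_two, Fin.sum_univ_two, ← two_mul, mul_pow, hγ, Real.log_inv, show (2 : ℝ) ^ 2 * 2⁻¹ = 2 by norm_num]
    intro h
    linarith [Real.log_pos one_lt_two]

/-- For `φ = α|00⟩ + β|11⟩`, `E_γ(|φ⟩⟨φ|) = 2(|α|+|β|)² ln(|α|+|β|)` while the von
Neumann reduced entropy is `-|α|² ln|α|² - |β|² ln|β|²`; in particular there is a
pure-state density operator on ℂ² ⊗ ℂ² on which the two differ. -/
theorem Egamma_ne_reduced_entropy (α β : ℂ)
    (hαβ : ‖α‖ ^ 2 + ‖β‖ ^ 2 = 1)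
    (φ : EuclideanSpace ℂ (Fin 2 × Fin 2))
    (hφ : φ = α • tensorVec (EuclideanSpace.single (0 : Fin 2) (1 : ℂ))
                            (EuclideanSpace.single (0 : Fin 2) (1 : ℂ)) +
              β • tensorVec (EuclideanSpace.single (1 : Fin 2) (1 : ℂ))
                            (EuclideanSpace.single (1 : Fin 2) (1 : ℂ))) :
    gammaNorm (projOnto φ) * Real.log (gammaNorm (projOnto φ)) =
      2 * (‖α‖ + ‖β‖) ^ 2 * Real.log (‖α‖ + ‖β‖) ∧
    vNEntropy (ptraceRight (projOnto φ)) =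
      -(‖α‖ ^ 2 * Real.log (‖α‖ ^ 2)) -
        ‖β‖ ^ 2 * Real.log (‖β‖ ^ 2) ∧
    ∃ ψ : EuclideanSpace ℂ (Fin 2 × Fin 2), ‖ψ‖ = 1 ∧
      gammaNorm (projOnto ψ) * Real.log (gammaNorm (projOnto ψ)) ≠
        vNEntropy (ptraceRight (projOnto ψ)) :=
  Egamma_ne_reduced_entropy_general α β φ hφ
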